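/- For every p ∈ (1,2) there exists a constant C = C(p) > 0, depending only on p, such that for every positive integer n and every s ∈ ℝ, |Φ_n'(s) · s| ≤ C · Φ_n(s). -/

import Mathlib

/-!
Writing `u = n² s²`, one has `Φ_n(s) = n^{-p} G(u)` for the fixed profile `G(u) = u^{p/2}` on
`u > 1` and `G(u) = p(p-2)/8 (u-1)² + p/2 (u-1) + 1` on `u ≤ 1`, which is `C¹` since both pieces
have value `1` and slope `p/2` at `u = 1`. Hence `Φ_n'(s) s = n^{-p} · 2u G'(u)` and it suffices
to bound `2u G'(u)` by `C G(u)` for `u ≥ 0`, uniformly in `n`. For `u > 1` the ratio is exactly `p`;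
on `[0, 1]` the numerator is at most `p(4-p)/2` while `G` is increasing with
`G(0) = (2-p)(4-p)/8 > 0`, which gives `C = 4p/(2-p)`.
-/

open Set Filter

/-- The `C²` regularization of `s ↦ |s|^p` from the proof of Lemma 3.2. -/
noncomputable def Phi (p : ℝ) (n : ℕ) (s : ℝ) : ℝ :=
  if 1 / (n : ℝ) < |s| then |s| ^ p
  else p * (p - 2) / (8 * (n : ℝ) ^ p) * ((n : ℝ) ^ 2 * s ^ 2 - 1) ^ 2
      + p / (2 * (n : ℝ) ^ p) * ((n : ℝ) ^ 2 * s ^ 2 - 1) + 1 / (n : ℝ) ^ p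

theorem hasDerivAt_ite_lt {f g f' g' : ℝ → ℝ} {a x : ℝ}
    (hf : ∀ y, a ≤ y → HasDerivAt f (f' y) y) (hg : ∀ y ≤ a, HasDerivAt g (g' y) y)
    (hfg : f a = g a) (hfg' : f' a = g' a) :
    HasDerivAt (fun y => if a < y then f y else g y) (if a < x then f' x else g' x) x := by
  rcases lt_trichotomy x a with hx | rfl | hx
  · rw [if_neg hx.not_gt]
    refine (hg x hx.le).congr_of_eventuallyEq ?_
    filter_upwards [eventually_lt_nhds hx] with y hy
    rw [if_neg hy.not_gt]
  · rw [if_neg (lt_irrefl x)]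
    have hright : HasDerivWithinAt (fun y => if x < y then f y else g y) (g' x) (Ici x) x := by
      refine ((hf x le_rfl).hasDerivWithinAt.congr (fun y hy => ?_) (by simp [hfg])).congr_deriv hfg'
      rcases (mem_Ici.1 hy).eq_or_lt with rfl | hy
      · simp [hfg]
      · simp [hy]
    have hleft : HasDerivWithinAt (fun y => if x < y then f y else g y) (g' x) (Iic x) x :=
      (hg x le_rfl).hasDerivWithinAt.congr (fun y hy => by simp [not_lt.2 (mem_Iic.1 hy)])
        (by simp)
    simpa [Iic_union_Ici] using hleft.union hright
  · rw [if_pos hx]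
    refine (hf x hx.le).congr_of_eventuallyEq ?_
    filter_upwards [eventually_gt_nhds hx] with y hy
    rw [if_pos hy]

noncomputable def phiProfile (p u : ℝ) : ℝ :=
  if 1 < u then u ^ (p / 2) else p * (p - 2) / 8 * (u - 1) ^ 2 + p / 2 * (u - 1) + 1

noncomputable def phiProfileDeriv (p u : ℝ) : ℝ :=
  if 1 < u then p / 2 * u ^ (p / 2 - 1) else p * (p - 2) / 4 * (u - 1) + p / 2

theorem hasDerivAt_phiProfile (p u : ℝ) :
    HasDerivAt (phiProfile p) (phiProfileDeriv p u) u := by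
  have hpoly (v : ℝ) : HasDerivAt (fun w => p * (p - 2) / 8 * (w - 1) ^ 2 + p / 2 * (w - 1) + 1)
      (p * (p - 2) / 4 * (v - 1) + p / 2) v := by
    have h : HasDerivAt (fun w => w - 1) 1 v := (hasDerivAt_id' v).sub_const 1
    exact ((((h.pow 2).const_mul _).add (h.const_mul _)).add_const 1).congr_deriv (by ring)
  have hpow (v : ℝ) (hv : 1 ≤ v) : HasDerivAt (fun w => w ^ (p / 2)) (p / 2 * v ^ (p / 2 - 1)) v :=
    Real.hasDerivAt_rpow_const (Or.inl (by linarith))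
  exact hasDerivAt_ite_lt hpow (fun v _ => hpoly v) (by simp) (by simp)

theorem Phi_eq_phiProfile (p : ℝ) {n : ℕ} (hn : 0 < n) (s : ℝ) :
    Phi p n s = phiProfile p ((n : ℝ) ^ 2 * s ^ 2) / (n : ℝ) ^ p := by
  have hN : (0 : ℝ) < n := by exact_mod_cast hn
  have hsq : (n : ℝ) ^ 2 * s ^ 2 = (n * |s|) ^ 2 := by rw [mul_pow, sq_abs]
  have hiff : 1 / (n : ℝ) < |s| ↔ 1 < (n : ℝ) ^ 2 * s ^ 2 := by
    rw [hsq, div_lt_iff₀' hN, one_lt_sq_iff₀ (by positivity)]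
  unfold Phi phiProfile
  split_ifs with h1 h2 h2
  · rw [hsq, ← Real.rpow_two, ← Real.rpow_mul (by positivity), mul_div_cancel₀ _ two_ne_zero,
      Real.mul_rpow hN.le (abs_nonneg s)]
    field_simp
  · exact absurd (hiff.1 h1) h2
  · exact absurd (hiff.2 h2) h1
  · ring

theorem abs_two_mul_mul_phiProfileDeriv_le {p u : ℝ} (hp0 : 0 < p) (hp2 : p < 2) (hu : 0 ≤ u) :
    |2 * u * phiProfileDeriv p u| ≤ 4 * p / (2 - p) * phiProfile p u := by
  have h2p : 0 < 2 - p := by linarith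
  have hC : p ≤ 4 * p / (2 - p) := by
    rw [le_div_iff₀ h2p]; nlinarith
  unfold phiProfile phiProfileDeriv
  split_ifs with hu1
  · have hu0 : 0 < u := by linarith
    have hrate : 2 * u * (p / 2 * u ^ (p / 2 - 1)) = p * u ^ (p / 2) := by
      rw [Real.rpow_sub_one hu0.ne']; field_simp
    rw [hrate, abs_of_nonneg (by positivity)]
    exact mul_le_mul_of_nonneg_right hC (by positivity)
  · rw [not_lt] at hu1
    have hrate : 2 * u * (p * (p - 2) / 4 * (u - 1) + p / 2) = p * u * ((2 - p) * (1 - u) / 2 + 1) := by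
      ring
    have hrate_le : p * u * ((2 - p) * (1 - u) / 2 + 1) ≤ p * 1 * ((2 - p) * 1 / 2 + 1) := by
      gcongr; linarith
    have hprofile_ge : (2 - p) * (4 - p) / 8 ≤ p * (p - 2) / 8 * (u - 1) ^ 2 + p / 2 * (u - 1) + 1 := by
      have : 0 ≤ p * u * ((2 - p) * (2 - u) / 8 + 1 / 2) := by
        have : 0 ≤ (2 - p) * (2 - u) := mul_nonneg h2p.le (by linarith)
        positivity
      linarith [show p * (p - 2) / 8 * (u - 1) ^ 2 + p / 2 * (u - 1) + 1 - (2 - p) * (4 - p) / 8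
        = p * u * ((2 - p) * (2 - u) / 8 + 1 / 2) by ring]
    rw [hrate, abs_of_nonneg (by positivity)]
    calc p * u * ((2 - p) * (1 - u) / 2 + 1) ≤ p * 1 * ((2 - p) * 1 / 2 + 1) := hrate_le
      _ = 4 * p / (2 - p) * ((2 - p) * (4 - p) / 8) := by field_simp; ring
      _ ≤ _ := by gcongr

theorem stmt_5 (p : ℝ) (hp1 : 1 < p) (hp2 : p < 2) :
    ∃ C > (0 : ℝ), ∀ n : ℕ, 0 < n → ∀ s : ℝ,
      |deriv (Phi p n) s * s| ≤ C * Phi p n s := by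
  refine ⟨4 * p / (2 - p), by apply div_pos <;> linarith, fun n hn s => ?_⟩
  have hN : (0 : ℝ) < (n : ℝ) ^ p := by positivity
  set u := (n : ℝ) ^ 2 * s ^ 2
  have hPhi : Phi p n = fun t => phiProfile p ((n : ℝ) ^ 2 * t ^ 2) / (n : ℝ) ^ p :=
    funext (Phi_eq_phiProfile p hn)
  have hderiv : deriv (Phi p n) s = phiProfileDeriv p u * ((n : ℝ) ^ 2 * (2 * s)) / (n : ℝ) ^ p := by
    have hsq : HasDerivAt (fun t => (n : ℝ) ^ 2 * t ^ 2) ((n : ℝ) ^ 2 * (2 * s)) s := by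
      simpa using (hasDerivAt_pow 2 s).const_mul ((n : ℝ) ^ 2)
    rw [hPhi]
    exact (((hasDerivAt_phiProfile p u).comp s hsq).div_const _).deriv
  calc |deriv (Phi p n) s * s| = |2 * u * phiProfileDeriv p u| / (n : ℝ) ^ p := by
        rw [hderiv, div_mul_eq_mul_div, abs_div, abs_of_pos hN]; congr 2; ring
    _ ≤ 4 * p / (2 - p) * phiProfile p u / (n : ℝ) ^ p := by
        gcongr; exact abs_two_mul_mul_phiProfileDeriv_le (by linarith) hp2 (by positivity)
    _ = 4 * p / (2 - p) * Phi p n s := by rw [Phi_eq_phiProfile p hn, mul_div_assoc]
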